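/- Let w be a weight on the unit circle with all Toeplitz determinants nonzero and let (φ_n, φ̄_n) be a BOPS for w, with associated functions ξ_n, ξ*_n. For z ∈ ℂ∖𝕋 define g_j(z) := 2z · (1/(2πi)) ∮_𝕋 (ζ^j/(ζ−z)) w(ζ) dζ/ζ. Then for every n ≥ 1 and z ∈ ℂ∖𝕋: (i) ξ_n(z) = (κ_n/I_n[w]) · det M, where M is the (n+1)×(n+1) matrix with entries M_(i,j) = w_(i−j) for 0 ≤ i ≤ n−1, 0 ≤ j ≤ n, and last row M_(n,j) = g_j(z); (ii) ξ*_n(z) = −(κ_n/I_n[w]) · det M*, where M* is the (n+1)×(n+1) matrix with entries M*_(i,j) = w_(i−j) for 0 ≤ i ≤ n, 0 ≤ j ≤ n−1, and last column M*_(i,n) = g_(n−i)(z). -/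

import Mathlib

open Polynomial Matrix Filter

noncomputable section

/-- `(1/(2πi)) ∮_𝕋 f(ζ) dζ/ζ`, written as `(1/(2π)) ∫_0^{2π} f(e^{iθ}) dθ`. -/
def circleAvg (f : ℂ → ℂ) : ℂ :=
  (2 * Real.pi : ℂ)⁻¹ * ∫ θ in (0:ℝ)..(2 * Real.pi), f (Complex.exp (θ * Complex.I))

/-- Fourier coefficient `w_k` of a weight `w` on the unit circle. -/
def fCoeff (w : ℂ → ℂ) (k : ℤ) : ℂ := circleAvg fun ζ => w ζ * ζ ^ (-k)

/-- Toeplitz determinant `I_n[w] = det (w_{j-k})_{j,k=0..n-1}`. -/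
def toeplitzDet (w : ℂ → ℂ) (n : ℕ) : ℂ :=
  (Matrix.of fun j k : Fin n => fCoeff w ((j : ℤ) - (k : ℤ))).det

/-- The Carathéodory function `F(z)`. -/
def cara (w : ℂ → ℂ) (z : ℂ) : ℂ := circleAvg fun ζ => (ζ + z) / (ζ - z) * w ζ

/-- A bi-orthogonal polynomial system (BOPS) on the unit circle for the weight `w`:
polynomials `φ_n`, `φ̄_n` of exact degree `n` with common leading coefficient `κ_n ≠ 0`,
bi-orthonormal with respect to `w`. -/
structure BOPS (w : ℂ → ℂ) where
  φ : ℕ → Polynomial ℂ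
  φb : ℕ → Polynomial ℂ
  κ : ℕ → ℂ
  κ_ne : ∀ n, κ n ≠ 0
  degφ : ∀ n, (φ n).degree ≤ n
  degφb : ∀ n, (φb n).degree ≤ n
  leadφ : ∀ n, (φ n).coeff n = κ n
  leadφb : ∀ n, (φb n).coeff n = κ n
  orth : ∀ m n, circleAvg (fun ζ => w ζ * (φ m).eval ζ * (φb n).eval ζ⁻¹)
      = if m = n then 1 else 0

namespace BOPS

variable {w : ℂ → ℂ}

/-- The reciprocal polynomial `φ*_n(z) = z^n φ̄_n(1/z)`. -/
def φs (S : BOPS w) (n : ℕ) : Polynomial ℂ := (S.φb n).reflect n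

/-- `r_n = φ_n(0)/κ_n`. -/
def r (S : BOPS w) (n : ℕ) : ℂ := (S.φ n).eval 0 / S.κ n

/-- `r̄_n = φ̄_n(0)/κ_n`. -/
def rb (S : BOPS w) (n : ℕ) : ℂ := (S.φb n).eval 0 / S.κ n

/-- Associated function `ξ_n`. -/
def ξ (S : BOPS w) : ℕ → ℂ → ℂ
  | 0, z => S.κ 0 * (fCoeff w 0 + cara w z)
  | n + 1, z => circleAvg fun ζ => (ζ + z) / (ζ - z) * w ζ * (S.φ (n + 1)).eval ζ

/-- Associated function `ξ*_n`. -/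
def ξs (S : BOPS w) : ℕ → ℂ → ℂ
  | 0, z => S.κ 0 * (fCoeff w 0 - cara w z)
  | n + 1, z =>
      -z ^ (n + 1) * circleAvg fun ζ => (ζ + z) / (ζ - z) * w ζ * (S.φb (n + 1)).eval ζ⁻¹

end BOPS

/-- A square matrix of size `K+1` built from a distinguished first row and `K` further rows. -/
def rowMat {K : ℕ} (top : Fin (K + 1) → ℂ) (rest : Fin K → Fin (K + 1) → ℂ) :
    Matrix (Fin (K + 1)) (Fin (K + 1)) ℂ :=
  Matrix.of fun i j => Fin.cases (top j) (fun r => rest r j) i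

end

/-- `g_j(z) := 2z (1/(2πi)) ∮_𝕋 (ζ^j/(ζ-z)) w(ζ) dζ/ζ`. -/
noncomputable def gfun (w : ℂ → ℂ) (j : ℕ) (z : ℂ) : ℂ :=
  2 * z * circleAvg fun ζ => ζ ^ j / (ζ - z) * w ζ

/-!
Write `c` and `c̄` for the coefficient vectors of `φ_n` and `φ̄_n`. Biorthogonality, turned into
moments by a triangular induction, says that `φ_n` and `φ̄_n` are orthogonal to all polynomials of
degree `< n`: `∑ₖ cₖ w_{l-k} = 0` and `∑ⱼ c̄ⱼ w_{j-l} = 0` for `l < n`. Splitting the Herglotz kernel,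
`(ζ+z)/(ζ-z) = 1 + 2z/(ζ-z)` and `z^n (ζ+z)/(ζ-z) = 2zζ^n/(ζ-z) + P(ζ)` with `deg P < n`, the same
orthogonality gives `ξ_n = ∑ₖ cₖ g_k` and `ξ*_n = -∑ⱼ c̄ⱼ g_{n-j}`. Hence `M c` and `M*ᵀ c̄` vanish
except in their last entry, which is `ξ_n`, resp. `-ξ*_n`, and Cramer's rule for the last
coordinate `c_n = c̄_n = κ_n` gives `κ_n det M = ξ_n I_n[w]` and `κ_n det M* = -ξ*_n I_n[w]`.
-/

open Finset

theorem Matrix.mul_det_eq_of_mulVec_eq_single {R : Type*} [CommRing R] {n : ℕ}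
    {A : Matrix (Fin (n + 1)) (Fin (n + 1)) R} {c : Fin (n + 1) → R} {x : R}
    (h : A *ᵥ c = Pi.single (Fin.last n) x) :
    c (Fin.last n) * A.det = x * (A.submatrix Fin.castSucc Fin.castSucc).det := by
  have hadj : A.adjugate *ᵥ (A *ᵥ c) = A.det • c := by
    rw [mulVec_mulVec, adjugate_mul, smul_mulVec, one_mulVec]
  have := congrFun hadj (Fin.last n)
  rw [h] at this
  simp only [mulVec_single, Pi.smul_apply, col_apply, adjugate_fin_succ_eq_det_submatrix,
    Fin.val_last, ← two_mul, pow_mul, neg_one_sq, one_pow, Fin.succAbove_last, one_mul,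
    MulOpposite.smul_eq_mul_unop, MulOpposite.unop_op, smul_eq_mul] at this
  rw [mul_comm, ← this, mul_comm]

theorem eq_zero_of_forall_sum_range_coeff_mul_eq_zero {R : Type*} [Semiring R] [NoZeroDivisors R]
    {q : ℕ → R[X]} (hq : ∀ l, (q l).coeff l ≠ 0) {L : ℕ → R} {n : ℕ}
    (h : ∀ l < n, ∑ j ∈ range (l + 1), (q l).coeff j * L j = 0) : ∀ l < n, L l = 0 := by
  intro l
  induction l using Nat.strong_induction_on with
  | _ l ih =>
    intro hl
    have hlower : ∑ j ∈ range l, (q l).coeff j * L j = 0 :=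
      sum_eq_zero fun j hj => by
        rw [ih j (mem_range.1 hj) ((mem_range.1 hj).trans hl), mul_zero]
    have := h l hl
    rw [sum_range_succ, hlower, zero_add] at this
    exact (mul_eq_zero.1 this).resolve_left (hq l)

local notation "𝕋" => Metric.sphere (0 : ℂ) 1

theorem circleAvg_eq_circleAverage (f : ℂ → ℂ) : circleAvg f = Real.circleAverage f 0 1 := by
  simp [circleAvg, Real.circleAverage, circleMap, Complex.real_smul]

theorem circleAvg_congr {f g : ℂ → ℂ} (h : Set.EqOn f g 𝕋) :
    circleAvg f = circleAvg g := by
  simp only [circleAvg_eq_circleAverage]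
  exact Real.circleAverage_congr_sphere (by simpa using h)

theorem circleAvg_const_mul (a : ℂ) (f : ℂ → ℂ) :
    circleAvg (fun ζ => a * f ζ) = a * circleAvg f := by
  simp only [circleAvg_eq_circleAverage]
  exact Real.circleAverage_fun_smul (𝕜 := ℂ)

theorem circleAvg_add {f g : ℂ → ℂ} (hf : ContinuousOn f 𝕋)
    (hg : ContinuousOn g 𝕋) :
    circleAvg (fun ζ => f ζ + g ζ) = circleAvg f + circleAvg g := by
  simp only [circleAvg_eq_circleAverage]
  exact Real.circleAverage_fun_add (hf.circleIntegrable zero_le_one)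
    (hg.circleIntegrable zero_le_one)

theorem circleAvg_sum {ι : Type*} {s : Finset ι} {f : ι → ℂ → ℂ}
    (hf : ∀ i ∈ s, ContinuousOn (f i) 𝕋) :
    circleAvg (fun ζ => ∑ i ∈ s, f i ζ) = ∑ i ∈ s, circleAvg (f i) := by
  simp only [circleAvg_eq_circleAverage]
  exact Real.circleAverage_fun_sum fun i hi => (hf i hi).circleIntegrable zero_le_one

theorem sub_ne_zero_of_mem_sphere_zero_one {ζ z : ℂ} (hζ : ζ ∈ 𝕋) (hz : ‖z‖ ≠ 1) : ζ - z ≠ 0 :=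
  sub_ne_zero.2 fun h => hz (by simpa [h] using hζ)

theorem continuousOn_inv_sphere_zero_one : ContinuousOn (fun ζ : ℂ => ζ⁻¹) 𝕋 :=
  continuousOn_inv₀.mono fun ζ hζ => ne_zero_of_mem_unit_sphere ⟨ζ, hζ⟩

theorem continuousOn_const_div_sub {z : ℂ} (hz : ‖z‖ ≠ 1) (a : ℂ) :
    ContinuousOn (fun ζ => a / (ζ - z)) 𝕋 :=
  continuousOn_const.div (continuousOn_id.sub continuousOn_const) fun _ hζ =>
    sub_ne_zero_of_mem_sphere_zero_one hζ hz

theorem circleAvg_mul_eval {f u : ℂ → ℂ} (hf : ContinuousOn f 𝕋) (hu : ContinuousOn u 𝕋)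
    {p : ℂ[X]} {N : ℕ} (hp : p.degree ≤ N) :
    circleAvg (fun ζ => f ζ * p.eval (u ζ)) =
      ∑ k ∈ range (N + 1), p.coeff k * circleAvg (fun ζ => f ζ * u ζ ^ k) := by
  have hlt : p.natDegree < N + 1 := Nat.lt_succ_of_le (natDegree_le_of_degree_le hp)
  simp_rw [eval_eq_sum_range' hlt, mul_sum, ← circleAvg_const_mul]
  rw [circleAvg_sum fun k _ => by fun_prop]
  refine sum_congr rfl fun k _ => congrArg circleAvg (funext fun ζ => by ring)

theorem circleAvg_mul_pow_mul_inv_pow (w : ℂ → ℂ) (k j : ℕ) :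
    circleAvg (fun ζ => w ζ * ζ ^ k * ζ⁻¹ ^ j) = fCoeff w (j - k) := by
  refine circleAvg_congr fun ζ hζ => ?_
  rw [mul_assoc, ← zpow_natCast, ← zpow_natCast, _root_.inv_zpow',
    ← zpow_add₀ (ne_zero_of_mem_unit_sphere ⟨ζ, hζ⟩), neg_sub, sub_eq_add_neg]

theorem circleAvg_mul_eval_mul_eval_inv {w : ℂ → ℂ} (hw : ContinuousOn w 𝕋) {p q : ℂ[X]}
    {M N : ℕ} (hp : p.degree ≤ M) (hq : q.degree ≤ N) :
    circleAvg (fun ζ => w ζ * p.eval ζ * q.eval ζ⁻¹) =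
      ∑ k ∈ range (M + 1), ∑ j ∈ range (N + 1), p.coeff k * q.coeff j * fCoeff w (j - k) := by
  have hinv := continuousOn_inv_sphere_zero_one
  calc circleAvg (fun ζ => w ζ * p.eval ζ * q.eval ζ⁻¹)
      = ∑ j ∈ range (N + 1), q.coeff j * circleAvg (fun ζ => w ζ * ζ⁻¹ ^ j * p.eval ζ) := by
        rw [circleAvg_mul_eval (hw.fun_mul p.continuousOn) hinv hq]
        exact sum_congr rfl fun j _ => congrArg _ (congrArg _ (funext fun ζ => by ring))
    _ = ∑ j ∈ range (N + 1), q.coeff j * ∑ k ∈ range (M + 1), p.coeff k * fCoeff w (j - k) := by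
        refine sum_congr rfl fun j _ => ?_
        rw [circleAvg_mul_eval (f := fun ζ => w ζ * ζ⁻¹ ^ j) (u := fun ζ => ζ) (hw.mul (hinv.pow j))
          continuousOn_id hp]
        simp_rw [mul_right_comm (w _), circleAvg_mul_pow_mul_inv_pow]
    _ = _ := by
        rw [sum_comm]
        simp_rw [mul_sum]
        exact sum_congr rfl fun k _ => sum_congr rfl fun j _ => by ring

theorem gfun_eq_circleAvg (w : ℂ → ℂ) (j : ℕ) (z : ℂ) :
    gfun w j z = circleAvg (fun ζ => 2 * z / (ζ - z) * w ζ * ζ ^ j) := by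
  rw [gfun, ← circleAvg_const_mul]
  exact congrArg circleAvg (funext fun ζ => by ring)

theorem exists_natDegree_lt_pow_mul_herglotz {n : ℕ} (hn : n ≠ 0) (z : ℂ) :
    ∃ P : ℂ[X], P.natDegree < n ∧ ∀ ζ, ζ - z ≠ 0 →
      z ^ n * ((ζ + z) / (ζ - z)) = 2 * z * ζ ^ n / (ζ - z) + P.eval ζ := by
  set Q : ℂ[X] := C (z ^ n) * (X + C z) - C (2 * z) * X ^ n
  have hroot : Q.IsRoot z := by
    simp only [Q, IsRoot.def, eval_sub, eval_mul, eval_pow, eval_C, eval_add, eval_X]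
    ring
  refine ⟨Q /ₘ (X - C z), ?_, fun ζ hζ => ?_⟩
  · have hQ : Q.natDegree ≤ n := by
      simp only [Q]
      compute_degree
      omega
    rw [natDegree_divByMonic Q (monic_X_sub_C z), natDegree_X_sub_C]
    omega
  · have hQζ : Q.eval ζ = z ^ n * (ζ + z) - 2 * z * ζ ^ n := by simp [Q]
    have h := congrArg (eval ζ) (mul_divByMonic_eq_iff_isRoot.2 hroot)
    rw [eval_mul, eval_sub, eval_X, eval_C, hQζ] at h
    field_simp
    linear_combination -h

namespace BOPS

variable {w : ℂ → ℂ} (S : BOPS w)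

theorem sum_coeff_φ_mul_fCoeff_eq_zero (hw : ContinuousOn w 𝕋) {n l : ℕ} (hl : l < n) :
    ∑ k ∈ range (n + 1), (S.φ n).coeff k * fCoeff w (l - k) = 0 := by
  refine eq_zero_of_forall_sum_range_coeff_mul_eq_zero
    (L := fun l => ∑ k ∈ range (n + 1), (S.φ n).coeff k * fCoeff w (l - k))
    (fun l => (S.leadφb l).trans_ne (S.κ_ne l)) (fun l hl => ?_) l hl
  have h := S.orth n l
  rw [circleAvg_mul_eval_mul_eval_inv hw (S.degφ n) (S.degφb l), if_neg hl.ne', sum_comm] at h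
  rw [← h]
  exact sum_congr rfl fun j _ => by rw [mul_sum]; exact sum_congr rfl fun k _ => by ring

theorem sum_coeff_φb_mul_fCoeff_eq_zero (hw : ContinuousOn w 𝕋) {n l : ℕ} (hl : l < n) :
    ∑ j ∈ range (n + 1), (S.φb n).coeff j * fCoeff w (j - l) = 0 := by
  refine eq_zero_of_forall_sum_range_coeff_mul_eq_zero
    (L := fun l => ∑ j ∈ range (n + 1), (S.φb n).coeff j * fCoeff w (j - l))
    (fun l => (S.leadφ l).trans_ne (S.κ_ne l)) (fun l hl => ?_) l hl
  have h := S.orth l n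
  rw [circleAvg_mul_eval_mul_eval_inv hw (S.degφ l) (S.degφb n), if_neg hl.ne] at h
  rw [← h]
  exact sum_congr rfl fun k _ => by rw [mul_sum]; exact sum_congr rfl fun j _ => by ring

theorem circleAvg_mul_eval_φ_eq_zero {n : ℕ} (hn : n ≠ 0) :
    circleAvg (fun ζ => w ζ * (S.φ n).eval ζ) = 0 := by
  have h := S.orth n 0
  rw [if_neg hn, eq_C_of_degree_le_zero (S.degφb 0), S.leadφb] at h
  simp_rw [eval_C, mul_comm _ (S.κ 0), circleAvg_const_mul] at h
  exact (mul_eq_zero.1 h).resolve_left (S.κ_ne 0)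

theorem circleAvg_mul_eval_mul_eval_φb_inv_eq_zero (hw : ContinuousOn w 𝕋) {n : ℕ} {P : ℂ[X]}
    (hP : P.natDegree < n) :
    circleAvg (fun ζ => w ζ * P.eval ζ * (S.φb n).eval ζ⁻¹) = 0 := by
  rw [circleAvg_mul_eval_mul_eval_inv hw (degree_le_of_natDegree_le hP.le) (S.degφb n)]
  refine sum_eq_zero fun k hk => ?_
  rcases (Nat.lt_succ_iff.1 (mem_range.1 hk)).lt_or_eq with hkn | rfl
  · simp_rw [mul_assoc, ← mul_sum, S.sum_coeff_φb_mul_fCoeff_eq_zero hw hkn, mul_zero]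
  · simp [coeff_eq_zero_of_natDegree_lt hP]

theorem ξ_eq_sum_coeff_mul_gfun (hw : ContinuousOn w 𝕋) {n : ℕ} (hn : n ≠ 0) {z : ℂ}
    (hz : ‖z‖ ≠ 1) : S.ξ n z = ∑ k ∈ range (n + 1), (S.φ n).coeff k * gfun w k z := by
  obtain ⟨m, rfl⟩ := Nat.exists_eq_add_one_of_ne_zero hn
  have hK : ContinuousOn (fun ζ => 2 * z / (ζ - z) * w ζ) 𝕋 :=
    (continuousOn_const_div_sub hz (2 * z)).fun_mul hw
  have hφ : ContinuousOn (fun ζ => (S.φ (m + 1)).eval ζ) 𝕋 := (S.φ _).continuousOn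
  calc S.ξ (m + 1) z
      = circleAvg (fun ζ => 2 * z / (ζ - z) * w ζ * (S.φ (m + 1)).eval ζ
          + w ζ * (S.φ (m + 1)).eval ζ) := by
        rw [ξ]
        refine circleAvg_congr fun ζ hζ => ?_
        have := sub_ne_zero_of_mem_sphere_zero_one hζ hz
        field_simp
        ring
    _ = _ := by
        rw [circleAvg_add (hK.fun_mul hφ) (hw.fun_mul hφ), S.circleAvg_mul_eval_φ_eq_zero hn, add_zero,
          circleAvg_mul_eval (u := fun ζ => ζ) hK continuousOn_id (S.degφ _)]
        simp_rw [gfun_eq_circleAvg]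

theorem ξs_eq_neg_sum_coeff_mul_gfun (hw : ContinuousOn w 𝕋) {n : ℕ} (hn : n ≠ 0) {z : ℂ}
    (hz : ‖z‖ ≠ 1) : S.ξs n z = -∑ j ∈ range (n + 1), (S.φb n).coeff j * gfun w (n - j) z := by
  obtain ⟨P, hP, hPeq⟩ := exists_natDegree_lt_pow_mul_herglotz hn z
  obtain ⟨m, rfl⟩ := Nat.exists_eq_add_one_of_ne_zero hn
  have hK : ContinuousOn (fun ζ => 2 * z / (ζ - z) * ζ ^ (m + 1) * w ζ) 𝕋 :=
    ((continuousOn_const_div_sub hz (2 * z)).fun_mul (continuousOn_id.pow (m + 1))).fun_mul hw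
  have hinv := continuousOn_inv_sphere_zero_one
  have hφb : ContinuousOn (fun ζ => (S.φb (m + 1)).eval ζ⁻¹) 𝕋 :=
    (S.φb _).continuous.comp_continuousOn hinv
  calc S.ξs (m + 1) z
      = -circleAvg (fun ζ => 2 * z / (ζ - z) * ζ ^ (m + 1) * w ζ * (S.φb (m + 1)).eval ζ⁻¹
          + w ζ * P.eval ζ * (S.φb (m + 1)).eval ζ⁻¹) := by
        rw [ξs, neg_mul, ← circleAvg_const_mul]
        refine congrArg _ (circleAvg_congr fun ζ hζ => ?_)
        rw [← mul_assoc, ← mul_assoc, hPeq ζ (sub_ne_zero_of_mem_sphere_zero_one hζ hz)]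
        ring
    _ = -∑ j ∈ range (m + 1 + 1), (S.φb (m + 1)).coeff j *
          circleAvg (fun ζ => 2 * z / (ζ - z) * ζ ^ (m + 1) * w ζ * ζ⁻¹ ^ j) := by
        rw [circleAvg_add (hK.fun_mul hφb) ((hw.fun_mul P.continuousOn).fun_mul hφb),
          S.circleAvg_mul_eval_mul_eval_φb_inv_eq_zero hw hP, add_zero,
          circleAvg_mul_eval hK hinv (S.degφb _)]
    _ = _ := by
        refine congrArg _ (sum_congr rfl fun j hj => congrArg _ ?_)
        rw [gfun_eq_circleAvg]
        refine circleAvg_congr fun ζ hζ => ?_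
        rw [pow_sub₀ _ (ne_zero_of_mem_unit_sphere ⟨ζ, hζ⟩) (Nat.lt_succ_iff.1 (mem_range.1 hj)),
          inv_pow]
        ring

theorem mulVec_coeff_φ_eq_single (hw : ContinuousOn w 𝕋) {n : ℕ} (hn : n ≠ 0) {z : ℂ}
    (hz : ‖z‖ ≠ 1) :
    (Matrix.of fun i j : Fin (n + 1) =>
        if (i : ℕ) < n then fCoeff w ((i : ℤ) - (j : ℤ)) else gfun w (j : ℕ) z) *ᵥ
      (fun k => (S.φ n).coeff k) = Pi.single (Fin.last n) (S.ξ n z) := by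
  ext i
  induction i using Fin.lastCases with
  | last =>
    simp only [mulVec, dotProduct, of_apply, Fin.val_last, lt_irrefl, if_false,
      Pi.single_eq_same]
    rw [Fin.sum_univ_eq_sum_range (fun k => gfun w k z * (S.φ n).coeff k),
      S.ξ_eq_sum_coeff_mul_gfun hw hn hz]
    simp_rw [mul_comm (gfun w _ z)]
  | cast i =>
    simp only [mulVec, dotProduct, of_apply, Fin.val_castSucc, Fin.is_lt, if_true,
      Pi.single_eq_of_ne (Fin.castSucc_ne_last i)]
    rw [Fin.sum_univ_eq_sum_range (fun k => fCoeff w (i - k) * (S.φ n).coeff k)]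
    simp_rw [mul_comm (fCoeff w _)]
    exact S.sum_coeff_φ_mul_fCoeff_eq_zero hw i.isLt

theorem transpose_mulVec_coeff_φb_eq_single (hw : ContinuousOn w 𝕋) {n : ℕ} (hn : n ≠ 0) {z : ℂ}
    (hz : ‖z‖ ≠ 1) :
    (Matrix.of fun i j : Fin (n + 1) =>
        if (j : ℕ) < n then fCoeff w ((i : ℤ) - (j : ℤ)) else gfun w (n - (i : ℕ)) z)ᵀ *ᵥ
      (fun k => (S.φb n).coeff k) = Pi.single (Fin.last n) (-S.ξs n z) := by
  ext j
  induction j using Fin.lastCases with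
  | last =>
    simp only [mulVec, dotProduct, transpose_apply, of_apply, Fin.val_last, lt_irrefl, if_false,
      Pi.single_eq_same]
    rw [Fin.sum_univ_eq_sum_range (fun k => gfun w (n - k) z * (S.φb n).coeff k),
      S.ξs_eq_neg_sum_coeff_mul_gfun hw hn hz, neg_neg]
    simp_rw [mul_comm (gfun w _ z)]
  | cast j =>
    simp only [mulVec, dotProduct, transpose_apply, of_apply, Fin.val_castSucc, Fin.is_lt, if_true,
      Pi.single_eq_of_ne (Fin.castSucc_ne_last j)]
    rw [Fin.sum_univ_eq_sum_range (fun k => fCoeff w (k - j) * (S.φb n).coeff k)]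
    simp_rw [mul_comm (fCoeff w _)]
    exact S.sum_coeff_φb_mul_fCoeff_eq_zero hw j.isLt

theorem κ_mul_det_eq_ξ_mul_toeplitzDet (hw : ContinuousOn w 𝕋) {n : ℕ} (hn : n ≠ 0) {z : ℂ}
    (hz : ‖z‖ ≠ 1) :
    S.κ n * (Matrix.of fun i j : Fin (n + 1) =>
        if (i : ℕ) < n then fCoeff w ((i : ℤ) - (j : ℤ)) else gfun w (j : ℕ) z).det =
      S.ξ n z * toeplitzDet w n := by
  have h := mul_det_eq_of_mulVec_eq_single (S.mulVec_coeff_φ_eq_single hw hn hz)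
  rw [Fin.val_last, S.leadφ] at h
  convert h using 2
  rw [toeplitzDet]
  congr 1
  ext i j
  simp

theorem κ_mul_det_eq_neg_ξs_mul_toeplitzDet (hw : ContinuousOn w 𝕋) {n : ℕ} (hn : n ≠ 0) {z : ℂ}
    (hz : ‖z‖ ≠ 1) :
    S.κ n * (Matrix.of fun i j : Fin (n + 1) =>
        if (j : ℕ) < n then fCoeff w ((i : ℤ) - (j : ℤ)) else gfun w (n - (i : ℕ)) z).det =
      -S.ξs n z * toeplitzDet w n := by
  have h := mul_det_eq_of_mulVec_eq_single (S.transpose_mulVec_coeff_φb_eq_single hw hn hz)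
  rw [Fin.val_last, S.leadφb, det_transpose, ← transpose_submatrix, det_transpose] at h
  convert h using 2
  rw [toeplitzDet]
  congr 1
  ext i j
  simp

end BOPS

/-- determinantal representations of the associated functions. -/
theorem assoc_fn_det_representation (w : ℂ → ℂ)
    (hw : ContinuousOn w (Metric.sphere (0 : ℂ) 1))
    (hI : ∀ n, toeplitzDet w n ≠ 0) (S : BOPS w)
    (n : ℕ) (hn : 1 ≤ n) (z : ℂ) (hz : ‖z‖ ≠ 1) :
    S.ξ n z = S.κ n / toeplitzDet w n *
      (Matrix.of fun i j : Fin (n + 1) =>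
        if (i : ℕ) < n then fCoeff w ((i : ℤ) - (j : ℤ)) else gfun w (j : ℕ) z).det ∧
    S.ξs n z = -(S.κ n / toeplitzDet w n) *
      (Matrix.of fun i j : Fin (n + 1) =>
        if (j : ℕ) < n then fCoeff w ((i : ℤ) - (j : ℤ)) else gfun w (n - (i : ℕ)) z).det := by
  have hn0 : n ≠ 0 := by omega
  have hdet := S.κ_mul_det_eq_ξ_mul_toeplitzDet hw hn0 hz
  have hdet' := S.κ_mul_det_eq_neg_ξs_mul_toeplitzDet hw hn0 hz
  constructor
  · field_simp [hI n]
    linear_combination -hdet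
  · field_simp [hI n]
    linear_combination hdet'
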